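/- For a simplicial module M, the Dold–Puppe projection commutes with the simplicial differential: b_n ∘ p_n = p_{n-1} ∘ b_n, where b_n = Σ_{i=0}^n (-1)^i ∂_{n,i} and p_n = (1 − s_{n-1,0}∂_{n,1})···(1 − s_{n-1,n-1}∂_{n,n}). -/

import Mathlib

open CategoryTheory

universe v u

/-- A simplicial module in a pre-additive category `C`: objects `M n` together with
face maps `δ n i : M (n+1) ⟶ M n` (representing `∂_{n+1,i}`, meaningful for `0 ≤ i ≤ n+1`)
and degeneracy maps `σ n i : M n ⟶ M (n+1)` (representing `s_{n,i}`, meaningful for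
`0 ≤ i ≤ n`), satisfying the standard simplicial identities.
Here `f ≫ g` denotes "first apply `f`, then `g`". -/
structure SimpMod (C : Type u) [Category.{v} C] [Preadditive C] where
  M : ℕ → C
  δ : ∀ n : ℕ, ℕ → (M (n + 1) ⟶ M n)
  σ : ∀ n : ℕ, ℕ → (M n ⟶ M (n + 1))
  /-- `∂_{n+1,k} ∂_{n+2,j} = ∂_{n+1,j} ∂_{n+2,k+1}` for `j ≤ k ≤ n+1`. -/
  δδ : ∀ n j k, j ≤ k → k ≤ n + 1 →
    δ (n + 1) j ≫ δ n k = δ (n + 1) (k + 1) ≫ δ n j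
  /-- `∂_{n+2,j} s_{n+1,k+1} = s_{n,k} ∂_{n+1,j}` for `j ≤ k ≤ n`. -/
  δσ_lt : ∀ n j k, j ≤ k → k ≤ n →
    σ (n + 1) (k + 1) ≫ δ (n + 1) j = δ n j ≫ σ n k
  /-- `∂_{n+1,j} s_{n,j} = 1` for `j ≤ n`. -/
  δσ_self : ∀ n j, j ≤ n → σ n j ≫ δ n j = 𝟙 (M n)
  /-- `∂_{n+1,j+1} s_{n,j} = 1` for `j ≤ n`. -/
  δσ_succ : ∀ n j, j ≤ n → σ n j ≫ δ n (j + 1) = 𝟙 (M n)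
  /-- `∂_{n+2,j+1} s_{n+1,k} = s_{n,k} ∂_{n+1,j}` for `k < j ≤ n+1`. -/
  δσ_gt : ∀ n j k, k < j → j ≤ n + 1 →
    σ (n + 1) k ≫ δ (n + 1) (j + 1) = δ n j ≫ σ n k
  /-- `s_{n+1,j} s_{n,k} = s_{n+1,k+1} s_{n,j}` for `j ≤ k ≤ n`. -/
  σσ : ∀ n j k, j ≤ k → k ≤ n →
    σ n k ≫ σ (n + 1) j = σ n j ≫ σ (n + 1) (k + 1)

namespace SimpMod

variable {C : Type u} [Category.{v} C] [Preadditive C] (X : SimpMod C)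

/-- The simplicial differential `b_{n+1} = ∑_{i=0}^{n+1} (-1)^i ∂_{n+1,i} : M_{n+1} → M_n`. -/
def b (n : ℕ) : X.M (n + 1) ⟶ X.M n :=
  ∑ i ∈ Finset.range (n + 2), ((-1 : ℤ) ^ i) • X.δ n i

/-- `pAux n k` is the product `(1 - s_{n,n-k+1}∂_{n+1,n-k+2})⋯(1 - s_{n,n}∂_{n+1,n+1})`
of the last `k` Dold–Puppe factors on `M_{n+1}`; thus `pAux n (n+1-i)` is the
Dold–Puppe operator `p_{n+1,i}` (for `i ≤ n+1`), the rightmost factor being applied first. -/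
def pAux (n : ℕ) : ℕ → (X.M (n + 1) ⟶ X.M (n + 1))
  | 0 => 𝟙 (X.M (n + 1))
  | k + 1 => pAux n k ≫ (𝟙 (X.M (n + 1)) - X.δ n (n - k + 1) ≫ X.σ n (n - k))

/-- The Dold–Puppe idempotent `p_n = (1 - s_{n-1,0}∂_{n,1})⋯(1 - s_{n-1,n-1}∂_{n,n}) : M_n → M_n`. -/
def p : ∀ n : ℕ, X.M n ⟶ X.M n
  | 0 => 𝟙 (X.M 0)
  | n + 1 => X.pAux n (n + 1)

lemma pAux_succ (n k : ℕ) : X.pAux n (k+1) =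
    X.pAux n k ≫ (𝟙 (X.M (n+1)) - X.δ n (n - k + 1) ≫ X.σ n (n - k)) := rfl

/-- Lemma A: higher faces vanish on `pAux`. -/
lemma vanish (n : ℕ) : ∀ k, k ≤ n + 1 → ∀ j, n + 2 ≤ j + k → j ≤ n + 1 →
    X.pAux n k ≫ X.δ n j = 0 := by
  intro k
  induction k with
  | zero => intro h1 j h2 h3; omega
  | succ k ih =>
    intro h1 j h2 h3
    have hk : k ≤ n := by omega
    rcases eq_or_ne j (n - k + 1) with hj | hj
    · subst hj
      have hs : X.σ n (n-k) ≫ X.δ n (n-k+1) = 𝟙 _ := X.δσ_succ n (n-k) (by omega)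
      rw [pAux_succ, Category.assoc, Preadditive.sub_comp, Category.id_comp,
        Category.assoc, hs, Category.comp_id, sub_self]
      simp
    · have hj2 : n - k + 2 ≤ j := by omega
      obtain ⟨n', rfl⟩ : ∃ n', n = n' + 1 := ⟨n - 1, by omega⟩
      obtain ⟨j', rfl⟩ : ∃ j', j = j' + 1 := ⟨j - 1, by omega⟩
      have h0 : X.pAux (n'+1) k ≫ X.δ (n'+1) (j'+1) = 0 := ih (by omega) (j'+1) (by omega) (by omega)
      have hgt : X.σ (n'+1) (n'+1-k) ≫ X.δ (n'+1) (j'+1)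
          = X.δ n' j' ≫ X.σ n' (n'+1-k) := X.δσ_gt n' j' (n'+1-k) (by omega) (by omega)
      have hdd : X.δ (n'+1) (n'+1-k+1) ≫ X.δ n' j'
          = X.δ (n'+1) (j'+1) ≫ X.δ n' (n'+1-k+1) := X.δδ n' (n'+1-k+1) j' (by omega) (by omega)
      rw [pAux_succ, Category.assoc, Preadditive.sub_comp, Category.id_comp,
        Category.assoc, hgt, Preadditive.comp_sub, h0,
        ← Category.assoc (X.δ (n'+1) (n'+1-k+1)) (X.δ n' j'), hdd]
      simp [reassoc_of% h0]

/-- Telescoping: `𝟙 - pAux n K` as a sum of terms ending in a degeneracy factor. -/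
lemma one_sub_pAux (n : ℕ) : ∀ K, 𝟙 (X.M (n+1)) - X.pAux n K =
    ∑ k ∈ Finset.range K, X.pAux n k ≫ (X.δ n (n - k + 1) ≫ X.σ n (n - k)) := by
  intro K
  induction K with
  | zero => simp [pAux]
  | succ K ih =>
    rw [Finset.sum_range_succ, ← ih, pAux_succ, Preadditive.comp_sub, Category.comp_id]
    abel

/-- Passing a degeneracy through `pAux` from the left. -/
lemma sigma_pAux (n t : ℕ) : ∀ k, t + k ≤ n + 1 →
    X.σ (n+1) t ≫ X.pAux (n+1) k = X.pAux n k ≫ X.σ (n+1) t := by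
  intro k
  induction k with
  | zero => simp [pAux]
  | succ k ih =>
    intro h
    have hk : k ≤ n := by omega
    have e1 : n + 1 - k = n - k + 1 := by omega
    have hgt : X.σ (n+1) t ≫ X.δ (n+1) (n - k + 1 + 1)
        = X.δ n (n - k + 1) ≫ X.σ n t := X.δσ_gt n (n - k + 1) t (by omega) (by omega)
    have hss : X.σ n (n - k) ≫ X.σ (n+1) t = X.σ n t ≫ X.σ (n+1) (n - k + 1) :=
      X.σσ n t (n - k) (by omega) (by omega)
    rw [pAux_succ, pAux_succ, ← Category.assoc, ih (by omega), Category.assoc, Category.assoc]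
    congr 1
    rw [e1, Preadditive.comp_sub, Preadditive.sub_comp, Category.comp_id, Category.id_comp]
    congr 1
    rw [← Category.assoc, hgt, Category.assoc, ← hss, ← Category.assoc]

/-- Lemma B: the Dold–Puppe projection kills degeneracies. -/
lemma sigma_p (n t : ℕ) (ht : t ≤ n) : X.σ n t ≫ X.p (n+1) = 0 := by
  have hfac : X.σ n t ≫ (𝟙 (X.M (n+1)) - X.δ n (t + 1) ≫ X.σ n t) = 0 := by
    rw [Preadditive.comp_sub, Category.comp_id, ← Category.assoc, X.δσ_succ n t ht,
      Category.id_comp, sub_self]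
  have base : X.σ n t ≫ X.pAux n (n - t + 1) = 0 := by
    have e : n - (n - t) = t := by omega
    rcases eq_or_lt_of_le ht with rfl | hlt
    · rw [pAux_succ]
      simp only [Nat.sub_self, Nat.sub_zero]
      rw [show X.pAux t 0 = 𝟙 _ from rfl, Category.id_comp]
      simpa using hfac
    · obtain ⟨n'', rfl⟩ : ∃ n'', n = n'' + 1 := ⟨n - 1, by omega⟩
      have hp := X.sigma_pAux n'' t (n'' + 1 - t) (by omega)
      rw [pAux_succ, ← Category.assoc, hp, Category.assoc, e]
      simp [hfac]
  have main : ∀ j, X.σ n t ≫ X.pAux n (n - t + 1 + j) = 0 := by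
    intro j
    induction j with
    | zero => exact base
    | succ j ih =>
      rw [show n - t + 1 + (j + 1) = (n - t + 1 + j) + 1 by omega, pAux_succ,
        ← Category.assoc, ih]
      simp
  have := main t
  rw [show n - t + 1 + t = n + 1 by omega] at this
  exact this

/-- Lemma C: degeneracy followed by differential followed by projection is zero. -/
lemma sigma_b_p (n m : ℕ) (hm : m ≤ n) : X.σ n m ≫ (X.b n ≫ X.p n) = 0 := by
  have key : ∀ i ∈ Finset.range (n+2),
      ((-1:ℤ)^i) • (X.σ n m ≫ (X.δ n i ≫ X.p n)) =
      (if i = m then ((-1:ℤ)^m) • X.p n else 0)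
        + (if i = m+1 then -(((-1:ℤ)^m) • X.p n) else 0) := by
    intro i hi
    simp only [Finset.mem_range] at hi
    rcases eq_or_ne i m with rfl | h1
    · rw [if_pos rfl, if_neg (by omega), add_zero, ← Category.assoc,
        X.δσ_self n i hm, Category.id_comp]
    rcases eq_or_ne i (m+1) with rfl | h2
    · rw [if_neg h1, if_pos rfl, zero_add, ← Category.assoc,
        X.δσ_succ n m hm, Category.id_comp]
      rw [pow_succ]
      module
    rw [if_neg h1, if_neg h2, add_zero]
    rcases lt_or_gt_of_ne h1 with hlt | hgt
    · -- i < m, so m ≥ 1 and n ≥ 1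
      obtain ⟨n0, rfl⟩ : ∃ n0, n = n0 + 1 := ⟨n - 1, by omega⟩
      obtain ⟨m0, rfl⟩ : ∃ m0, m = m0 + 1 := ⟨m - 1, by omega⟩
      have h := X.δσ_lt n0 i m0 (by omega) (by omega)
      rw [← Category.assoc, h, Category.assoc, X.sigma_p n0 m0 (by omega)]
      simp
    · -- i ≥ m + 2, so i ≥ 2 and n ≥ 1
      obtain ⟨n0, rfl⟩ : ∃ n0, n = n0 + 1 := ⟨n - 1, by omega⟩
      obtain ⟨i0, rfl⟩ : ∃ i0, i = i0 + 1 := ⟨i - 1, by omega⟩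
      have h := X.δσ_gt n0 i0 m (by omega) (by omega)
      rw [← Category.assoc, h, Category.assoc, X.sigma_p n0 m (by omega)]
      simp
  rw [b, Preadditive.sum_comp, Preadditive.comp_sum]
  simp only [Preadditive.zsmul_comp, Preadditive.comp_zsmul]
  rw [Finset.sum_congr rfl key, Finset.sum_add_distrib,
    Finset.sum_ite_eq' (Finset.range (n+2)) m, Finset.sum_ite_eq' (Finset.range (n+2)) (m+1),
    if_pos (Finset.mem_range.mpr (by omega)), if_pos (Finset.mem_range.mpr (by omega)),
    add_neg_cancel]

/-- Lemma D: after `p ≫ δ 0`, the lower projection acts as the identity. -/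
lemma p_d0_pAux (n : ℕ) : ∀ k, k ≤ n + 1 →
    X.p (n+2) ≫ (X.δ (n+1) 0 ≫ X.pAux n k) = X.p (n+2) ≫ X.δ (n+1) 0 := by
  intro k
  induction k with
  | zero => simp [pAux]
  | succ k ih =>
    intro h
    have hk : k ≤ n := by omega
    have hdd : X.δ (n+1) 0 ≫ X.δ n (n - k + 1) = X.δ (n+1) (n - k + 1 + 1) ≫ X.δ n 0 :=
      X.δδ n 0 (n - k + 1) (by omega) (by omega)
    have hvan : X.pAux (n+1) (n+2) ≫ X.δ (n+1) (n - k + 1 + 1) = 0 :=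
      X.vanish (n+1) (n+2) (by omega) _ (by omega) (by omega)
    have hp : X.p (n+2) = X.pAux (n+1) (n+2) := rfl
    rw [pAux_succ, ← Category.assoc (X.δ (n+1) 0), ← Category.assoc, ih (by omega),
      Preadditive.comp_sub, Category.comp_id, Category.assoc, ← Category.assoc (X.δ (n+1) 0),
      hdd, hp]
    simp [reassoc_of% hvan]

end SimpMod

/-- For a simplicial module `M`, the Dold–Puppe projection commutes with the
simplicial differential: `b_n ∘ p_n = p_{n-1} ∘ b_n`. (Stated at degree `n+1`:
`b_{n+1} p_{n+1} = p_n b_{n+1}`, where `X.b n : M (n+1) ⟶ M n` is `b_{n+1}`.) -/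
theorem dold_puppe_comm_b {C : Type u} [Category.{v} C] [Preadditive C]
    (X : SimpMod C) (n : ℕ) :
    X.p (n + 1) ≫ X.b n = X.b n ≫ X.p n := by
  have hA : X.p (n+1) ≫ X.b n = X.p (n+1) ≫ X.δ n 0 := by
    rw [SimpMod.b, Preadditive.comp_sum]
    rw [Finset.sum_eq_single_of_mem 0 (Finset.mem_range.mpr (by omega))
      (fun i hi hne => by
        have hi' := Finset.mem_range.mp hi
        rw [Preadditive.comp_zsmul, show X.p (n+1) = X.pAux n (n+1) from rfl,
          X.vanish n (n+1) le_rfl i (by omega) (by omega), smul_zero])]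
    simp
  have hB : X.b n ≫ X.p n = X.p (n+1) ≫ (X.b n ≫ X.p n) := by
    have hz : (𝟙 (X.M (n+1)) - X.p (n+1)) ≫ (X.b n ≫ X.p n) = 0 := by
      rw [show X.p (n+1) = X.pAux n (n+1) from rfl, X.one_sub_pAux n (n+1),
        Preadditive.sum_comp]
      refine Finset.sum_eq_zero fun k hk => ?_
      simp only [Finset.mem_range] at hk
      have hc := X.sigma_b_p n (n - k) (by omega)
      simp only [Category.assoc]
      rw [hc, Limits.comp_zero, Limits.comp_zero]
    rw [Preadditive.sub_comp, Category.id_comp, sub_eq_zero] at hz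
    exact hz
  have hD : X.p (n+1) ≫ (X.δ n 0 ≫ X.p n) = X.p (n+1) ≫ X.δ n 0 := by
    cases n with
    | zero =>
      show _ ≫ (_ ≫ 𝟙 _) = _
      rw [Category.comp_id]
    | succ n0 => exact X.p_d0_pAux n0 (n0+1) le_rfl
  have final : X.b n ≫ X.p n = X.p (n+1) ≫ X.b n :=
    calc X.b n ≫ X.p n = X.p (n+1) ≫ (X.b n ≫ X.p n) := hB
    _ = (X.p (n+1) ≫ X.b n) ≫ X.p n := by rw [Category.assoc]
    _ = (X.p (n+1) ≫ X.δ n 0) ≫ X.p n := by rw [hA]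
    _ = X.p (n+1) ≫ (X.δ n 0 ≫ X.p n) := by rw [Category.assoc]
    _ = X.p (n+1) ≫ X.δ n 0 := hD
    _ = X.p (n+1) ≫ X.b n := hA.symm
  exact final.symm
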